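/- arXiv:2004.12309 — 2 statements merged into one kernel-verified Lean document; each statement's English description precedes it below -/
import Mathlib

section
/- Let μ : [k₀, ∞) → ℝ be nonnegative and non-increasing, and suppose there exist constants M > 0, α > 0, β > 1 such that μ(h) ≤ (M/(h-k))^α · μ(k)^β for all h > k ≥ k₀. Then with d = M · 2^(β/(β-1)) · μ(k₀)^((β-1)/α), one has μ(h) = 0 for all h ≥ k₀ + d. -/
/-!
De Giorgi's iteration along the dyadic levels `kₙ = k₀ + d - d / 2ⁿ`: the growth condition gives
`μ(kₙ₊₁) ≤ (2M/d)^α 2^(nα) μ(kₙ)^β`, and a recursion of this shape decays geometrically,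
`μ(kₙ) ≤ μ(k₀) rⁿ` with `r = 2^(-α/(β-1))`, as soon as `(2M/d)^α μ(k₀)^(β-1) ≤ r`. The value of
`d` in the theorem makes this an equality, and `μ(k₀ + d) ≤ μ(kₙ) → 0`.
-/

open Real Filter Topology

lemma le_mul_pow_of_succ_le_mul_rpow {y : ℕ → ℝ} {C r β : ℝ} (hC : 0 ≤ C) (hr : 0 < r)
    (hβ : 0 < β) (hy : ∀ n, 0 ≤ y n)
    (hrec : ∀ n, y (n + 1) ≤ C * (r ^ n) ^ (1 - β) * y n ^ β)
    (hy₀ : C * y 0 ^ (β - 1) ≤ r) (n : ℕ) : y n ≤ y 0 * r ^ n := by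
  induction n with
  | zero => simp
  | succ n ih =>
    have hrn : 0 < r ^ n := pow_pos hr n
    calc y (n + 1) ≤ C * (r ^ n) ^ (1 - β) * (y 0 * r ^ n) ^ β :=
          (hrec n).trans (by gcongr; exact hy n)
      _ = C * y 0 ^ (β - 1) * y 0 * ((r ^ n) ^ (1 - β) * (r ^ n) ^ β) := by
          have hy₀β : y 0 ^ β = y 0 ^ (β - 1) * y 0 := by
            rw [← rpow_add_one' (hy 0) (by linarith), sub_add_cancel]
          rw [mul_rpow (hy 0) hrn.le, hy₀β]
          ring
      _ = C * y 0 ^ (β - 1) * y 0 * r ^ n := by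
          rw [← rpow_add hrn, sub_add_cancel, rpow_one]
      _ ≤ r * y 0 * r ^ n := by gcongr; exact hy 0
      _ = y 0 * r ^ (n + 1) := by ring

lemma two_mul_div_rpow_mul_rpow_eq {M α β m : ℝ} (hM : 0 < M) (hm : 0 < m) (hα : 0 < α)
    (hβ : 1 < β) :
    (2 * M / (M * 2 ^ (β / (β - 1)) * m ^ ((β - 1) / α))) ^ α * m ^ (β - 1)
      = (2 : ℝ) ^ (-α / (β - 1)) := by
  have hβ1 : β - 1 ≠ 0 := by linarith
  have hbase : 2 * M / (M * 2 ^ (β / (β - 1)) * m ^ ((β - 1) / α))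
      = 2 ^ (-1 / (β - 1)) * (m ^ ((β - 1) / α))⁻¹ := by
    rw [show (-1 / (β - 1)) = 1 - β / (β - 1) by field_simp; ring, rpow_sub two_pos, rpow_one]
    field_simp
  rw [hbase, mul_rpow (by positivity) (by positivity), inv_rpow (by positivity),
    ← rpow_mul two_pos.le, ← rpow_mul hm.le, div_mul_cancel₀ _ hα.ne',
    inv_mul_cancel_right₀ (by positivity)]
  congr 1
  ring

lemma eq_zero_of_le_div_rpow_mul_rpow {k₀ M α β d : ℝ} {μ : ℝ → ℝ}
    (hM : 0 ≤ M) (hα : 0 < α) (hβ : 1 < β) (hd : 0 < d)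
    (hnonneg : ∀ t, k₀ ≤ t → 0 ≤ μ t)
    (hmono : ∀ s t, k₀ ≤ s → s ≤ t → μ t ≤ μ s)
    (hgrowth : ∀ h k, k₀ ≤ k → k < h → μ h ≤ (M / (h - k)) ^ α * μ k ^ β)
    (hd_large : (2 * M / d) ^ α * μ k₀ ^ (β - 1) ≤ (2 : ℝ) ^ (-α / (β - 1))) :
    μ (k₀ + d) = 0 := by
  have hβ1 : β - 1 ≠ 0 := by linarith
  set r := (2 : ℝ) ^ (-α / (β - 1)) with hr_def
  set k : ℕ → ℝ := fun n ↦ k₀ + d - d / 2 ^ n with hk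
  have hk_ge (n : ℕ) : k₀ ≤ k n := by
    have : d / 2 ^ n ≤ d := div_le_self hd.le (one_le_pow₀ one_le_two)
    simp only [hk]; linarith
  have hk_le (n : ℕ) : k n ≤ k₀ + d := by
    have : 0 ≤ d / 2 ^ n := by positivity
    simp only [hk]; linarith
  have hk_succ (n : ℕ) : k (n + 1) - k n = d / 2 ^ (n + 1) := by
    simp only [hk, pow_succ]; field_simp; ring
  have hcoef (n : ℕ) : (M / (d / 2 ^ (n + 1))) ^ α = (2 * M / d) ^ α * (r ^ n) ^ (1 - β) := by
    have hr_pow : (r ^ n) ^ (1 - β) = ((2 : ℝ) ^ n) ^ α := by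
      rw [hr_def, ← rpow_natCast, ← rpow_natCast (2 : ℝ), ← rpow_mul two_pos.le,
        ← rpow_mul (by positivity), ← rpow_mul two_pos.le]
      congr 1
      field_simp
      ring
    rw [hr_pow, ← mul_rpow (by positivity) (by positivity), pow_succ]
    field_simp
  have hdecay (n : ℕ) : μ (k n) ≤ μ (k 0) * r ^ n := by
    refine le_mul_pow_of_succ_le_mul_rpow (C := (2 * M / d) ^ α) (β := β)
      (by positivity) (by positivity) (by linarith)
      (fun m ↦ hnonneg _ (hk_ge m)) (fun m ↦ ?_) (by simpa [hk] using hd_large) n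
    have hlt : k m < k (m + 1) := by
      linarith [hk_succ m, show 0 < d / 2 ^ (m + 1) by positivity]
    have h := hgrowth (k (m + 1)) (k m) (hk_ge m) hlt
    rwa [hk_succ, hcoef] at h
  have hr : r < 1 := rpow_lt_one_of_one_lt_of_neg one_lt_two
    (div_neg_of_neg_of_pos (neg_neg_of_pos hα) (by linarith))
  have hlim : Tendsto (fun n : ℕ ↦ μ (k 0) * r ^ n) atTop (𝓝 0) := by
    simpa using
      (tendsto_pow_atTop_nhds_zero_of_lt_one (by positivity) hr).const_mul (μ (k 0))
  refine le_antisymm (ge_of_tendsto hlim (Eventually.of_forall fun n ↦ ?_))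
    (hnonneg _ (by linarith))
  exact (hmono _ _ (hk_ge n) (hk_le n)).trans (hdecay n)

theorem stmt_9 (k₀ M α β : ℝ) (μ : ℝ → ℝ)
    (hM : 0 < M) (hα : 0 < α) (hβ : 1 < β)
    (hnonneg : ∀ t, k₀ ≤ t → 0 ≤ μ t)
    (hmono : ∀ s t, k₀ ≤ s → s ≤ t → μ t ≤ μ s)
    (hgrowth : ∀ h k, k₀ ≤ k → k < h → μ h ≤ (M / (h - k)) ^ α * μ k ^ β) :
    ∀ h : ℝ, k₀ + M * (2 : ℝ) ^ (β / (β - 1)) * μ k₀ ^ ((β - 1) / α) ≤ h → μ h = 0 := by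
  intro h hh
  obtain hzero | hpos := (hnonneg k₀ le_rfl).eq_or_lt
  · rw [← hzero, zero_rpow (by positivity), mul_zero, add_zero] at hh
    exact le_antisymm (hzero ▸ hmono _ _ le_rfl hh) (hnonneg h hh)
  · set d := M * (2 : ℝ) ^ (β / (β - 1)) * μ k₀ ^ ((β - 1) / α)
    have hd : 0 < d := by positivity
    have hμd : μ (k₀ + d) = 0 := eq_zero_of_le_div_rpow_mul_rpow hM.le hα hβ hd hnonneg hmono
      hgrowth (two_mul_div_rpow_mul_rpow_eq hM hpos hα hβ).le
    exact le_antisymm (hμd ▸ hmono _ _ (by linarith) hh) (hnonneg h (by linarith))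
end

section
/- Under the hypotheses of De Giorgi's iteration lemma, defining k_s = k₀ + d - d/2^s and r = 2^(α/(β-1)), the induction estimate μ(k_{s+1}) ≤ (M^α 2^{(s+1)α}/d^α) μ(k_s)^β combined with μ(k_s) ≤ μ(k₀)/r^s implies μ(k_{s+1}) ≤ μ(k₀)/r^{s+1}. -/
/-!
Since `r ^ (β - 1) = 2 ^ α` and `d ^ α = M ^ α * r ^ β * μ(k₀) ^ (β - 1)`, inserting the inductive
bound into the recursive estimate gives
`(r ^ (β - 1)) ^ (s + 1) / (r ^ β * μ(k₀) ^ (β - 1)) * μ(k₀) ^ β / r ^ (s * β) = μ(k₀) / r ^ (s + 1)`: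
the exponents of `r` add up to `-(s + 1)` and those of `μ(k₀)` to `1`.
-/

open Real

lemma le_add_sub_div_two_pow {k₀ d : ℝ} (hd : 0 ≤ d) (n : ℕ) : k₀ ≤ k₀ + d - d / 2 ^ n := by
  have : d / 2 ^ n ≤ d := div_le_self hd (one_le_pow₀ one_le_two)
  linarith

lemma rpow_div_rpow_cancel {a : ℝ} (ha : 0 ≤ a) (x : ℝ) {y : ℝ} (hy : y ≠ 0) :
    (a ^ (x / y)) ^ y = a ^ x := by
  rw [← rpow_mul ha, div_mul_cancel₀ _ hy]

lemma deGiorgi_const_rpow {M α β μ₀ : ℝ} (hM : 0 ≤ M) (hα : α ≠ 0) (hμ₀ : 0 ≤ μ₀) :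
    (M * 2 ^ (β / (β - 1)) * μ₀ ^ ((β - 1) / α)) ^ α
      = M ^ α * ((2 : ℝ) ^ (α / (β - 1))) ^ β * μ₀ ^ (β - 1) := by
  rw [mul_rpow (by positivity) (by positivity), mul_rpow hM (by positivity),
    rpow_div_rpow_cancel hμ₀ _ hα, ← rpow_mul zero_le_two, ← rpow_mul zero_le_two]
  ring_nf

lemma two_rpow_succ_mul {α β : ℝ} (hβ : β ≠ 1) (s : ℕ) :
    (2 : ℝ) ^ (((s : ℝ) + 1) * α) = (((2 : ℝ) ^ (α / (β - 1))) ^ (β - 1)) ^ (s + 1) := by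
  rw [rpow_div_rpow_cancel zero_le_two _ (sub_ne_zero.2 hβ), ← rpow_mul_natCast zero_le_two,
    mul_comm]
  push_cast
  ring_nf

lemma mul_pow_succ_div_mul_div_pow_rpow {K r μ₀ β : ℝ} (hK : K ≠ 0) (hr : 0 < r) (hμ₀ : 0 ≤ μ₀)
    (hβ : β ≠ 0) (s : ℕ) :
    K * (r ^ (β - 1)) ^ (s + 1) / (K * r ^ β * μ₀ ^ (β - 1)) * (μ₀ / r ^ s) ^ β
      = μ₀ / r ^ (s + 1) := by
  rcases hμ₀.eq_or_lt with rfl | hμ₀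
  · simp [zero_rpow hβ]
  have hrβ : r ^ β = r * r ^ (β - 1) := by
    rw [mul_comm, ← rpow_add_one hr.ne', sub_add_cancel]
  have hμβ : μ₀ ^ β = μ₀ * μ₀ ^ (β - 1) := by
    rw [mul_comm, ← rpow_add_one hμ₀.ne', sub_add_cancel]
  rw [div_rpow hμ₀.le (by positivity), ← rpow_pow_comm hr.le, hrβ, hμβ]
  have : 0 < r ^ (β - 1) := by positivity
  have : 0 < μ₀ ^ (β - 1) := by positivity
  field_simp
  ring

theorem stmt_10_general (k₀ M α β d r : ℝ) (μ : ℝ → ℝ) (k : ℕ → ℝ) (s : ℕ)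
    (hM : 0 < M) (hα : 0 < α) (hβ : 1 < β)
    (hnonneg : ∀ t, k₀ ≤ t → 0 ≤ μ t)
    (hd : d = M * (2 : ℝ) ^ (β / (β - 1)) * μ k₀ ^ ((β - 1) / α))
    (hr : r = (2 : ℝ) ^ (α / (β - 1)))
    (hk : ∀ n : ℕ, k n = k₀ + d - d / 2 ^ n)
    (hrec : μ (k (s + 1)) ≤ M ^ α * (2 : ℝ) ^ (((s : ℝ) + 1) * α) / d ^ α * μ (k s) ^ β)
    (hind : μ (k s) ≤ μ k₀ / r ^ s) :
    μ (k (s + 1)) ≤ μ k₀ / r ^ (s + 1) := by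
  have hμ₀ : 0 ≤ μ k₀ := hnonneg k₀ le_rfl
  have hd₀ : 0 ≤ d := hd ▸ by positivity
  have hμs : 0 ≤ μ (k s) := hnonneg _ <| hk s ▸ le_add_sub_div_two_pow hd₀ s
  have hdα : d ^ α = M ^ α * r ^ β * μ k₀ ^ (β - 1) := by
    rw [hd, hr, deGiorgi_const_rpow hM.le hα.ne' hμ₀]
  have hr₀ : 0 < r := hr ▸ by positivity
  calc μ (k (s + 1)) ≤ M ^ α * (2 : ℝ) ^ (((s : ℝ) + 1) * α) / d ^ α * μ (k s) ^ β := hrec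
    _ ≤ M ^ α * (2 : ℝ) ^ (((s : ℝ) + 1) * α) / d ^ α * (μ k₀ / r ^ s) ^ β := by gcongr
    _ = μ k₀ / r ^ (s + 1) := by
      rw [hdα, two_rpow_succ_mul hβ.ne', ← hr]
      exact mul_pow_succ_div_mul_div_pow_rpow (by positivity) hr₀ hμ₀ (by positivity) s

theorem stmt_10 (k₀ M α β d r : ℝ) (μ : ℝ → ℝ) (k : ℕ → ℝ) (s : ℕ)
    (hM : 0 < M) (hα : 0 < α) (hβ : 1 < β)
    (hnonneg : ∀ t, k₀ ≤ t → 0 ≤ μ t)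
    (hmono : ∀ x y, k₀ ≤ x → x ≤ y → μ y ≤ μ x)
    (hgrowth : ∀ h k', k₀ ≤ k' → k' < h → μ h ≤ (M / (h - k')) ^ α * μ k' ^ β)
    (hd : d = M * (2 : ℝ) ^ (β / (β - 1)) * μ k₀ ^ ((β - 1) / α))
    (hr : r = (2 : ℝ) ^ (α / (β - 1)))
    (hk : ∀ n : ℕ, k n = k₀ + d - d / 2 ^ n)
    (hrec : μ (k (s + 1)) ≤ M ^ α * (2 : ℝ) ^ (((s : ℝ) + 1) * α) / d ^ α * μ (k s) ^ β)
    (hind : μ (k s) ≤ μ k₀ / r ^ s) :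
    μ (k (s + 1)) ≤ μ k₀ / r ^ (s + 1) :=
  stmt_10_general k₀ M α β d r μ k s hM hα hβ hnonneg hd hr hk hrec hind
end
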